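/- Let N be a rooted phylogenetic network on a finite set X. The normalisation Ñ of N has no shortcuts; that is, Ñ contains no arc (u,v) for which Ñ also contains a directed path from u to v of length at least 2. -/

import Mathlib

/-!
Formalisation framework for rooted phylogenetic networks.

A network is represented as a directed graph on an ambient vertex type `V`:
a vertex set `verts`, a root vertex `root`, and an arc relation `arc`.
-/

structure Net (V : Type*) where
  verts : Set V
  root : V
  arc : V → V → Prop

namespace Net

variable {V : Type*} {W : Type*}

/-- `N.reach u v` means there is a (possibly empty) directed path from `u` to `v`. -/
def reach (N : Net V) : V → V → Prop := Relation.ReflTransGen N.arc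

/-- The in-degree of a vertex. -/
noncomputable def inDeg (N : Net V) (v : V) : ℕ := {u | N.arc u v}.ncard

/-- The out-degree of a vertex. -/
noncomputable def outDeg (N : Net V) (v : V) : ℕ := {w | N.arc v w}.ncard

/-- The leaves of `N`: the vertices of out-degree 0. -/
def leaves (N : Net V) : Set V := {v ∈ N.verts | N.outDeg v = 0}

/-- `N.IsPathFrom u v l` : the list `l` is a directed path in `N` from `u` to `v`
(consecutive entries joined by arcs; a one-element list is the empty path). -/
def IsPathFrom (N : Net V) (u v : V) (l : List V) : Prop :=
  l.Chain' N.arc ∧ l.head? = some u ∧ l.getLast? = some v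

/-- A vertex is visible if some leaf is such that every directed path from the
root to that leaf passes through the vertex. -/
def Visible (N : Net V) (x : V) : Prop :=
  x ∈ N.verts ∧ ∃ y ∈ N.leaves, ∀ l : List V, N.IsPathFrom N.root y l → x ∈ l

/-- A subdividing vertex is one of in-degree 1 and out-degree 1. -/
def Subdividing (N : Net V) (v : V) : Prop := N.inDeg v = 1 ∧ N.outDeg v = 1

/-- The digraph `Cov(N)` on the visible vertices of `N`: an arc `(u,v)` whenever
`u ≠ v`, `u →_N v`, and no visible vertex lies strictly between `u` and `v`. -/
def cov (N : Net V) : Net V where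
  verts := {v | N.Visible v}
  root := N.root
  arc u v := N.Visible u ∧ N.Visible v ∧ u ≠ v ∧ N.reach u v ∧
    ¬ ∃ w, N.Visible w ∧ w ≠ u ∧ w ≠ v ∧ N.reach u w ∧ N.reach w v

/-- The normalisation `Ñ` of `N`: obtained from `Cov(N)` by suppressing every
subdividing vertex.  Its vertices are the visible vertices of `N` that are not
subdividing in `Cov(N)`, with an arc `(u,v)` whenever `Cov(N)` has a directed path
from `u` to `v` (of length at least one) all of whose interior vertices are
subdividing in `Cov(N)`. -/
def normalise (N : Net V) : Net V where
  verts := {v | N.Visible v ∧ ¬ N.cov.Subdividing v}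
  root := N.root
  arc u v := (N.Visible u ∧ ¬ N.cov.Subdividing u) ∧ (N.Visible v ∧ ¬ N.cov.Subdividing v) ∧
    ∃ l : List V, N.cov.IsPathFrom u v l ∧ 2 ≤ l.length ∧
      ∀ w ∈ l.tail.dropLast, N.cov.Subdividing w

/-- `N` is a rooted phylogenetic network on the finite nonempty leaf set `X`. -/
structure IsPhylo (N : Net V) (X : Set V) : Prop where
  finite : N.verts.Finite
  nonempty : X.Nonempty
  arc_mem : ∀ ⦃u v : V⦄, N.arc u v → u ∈ N.verts ∧ v ∈ N.verts
  acyclic : ∀ ⦃u v : V⦄, N.arc u v → ¬ N.reach v u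
  root_mem : N.root ∈ N.verts
  root_inDeg : N.inDeg N.root = 0
  root_unique : ∀ v ∈ N.verts, N.inDeg v = 0 → v = N.root
  leaves_eq : N.leaves = X
  leaf_inDeg : ∀ x ∈ X, N.inDeg x = 1
  interior_deg : ∀ v ∈ N.verts, v ≠ N.root → v ∉ X →
    (N.inDeg v = 1 ∧ 2 ≤ N.outDeg v) ∨ (N.outDeg v = 1 ∧ 2 ≤ N.inDeg v)

/-- `N` has no shortcuts: no arc `(u,v)` such that there is also a directed path
from `u` to `v` of length at least 2 (i.e. a path-list with at least 3 entries). -/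
def NoShortcuts (N : Net V) : Prop :=
  ∀ u v : V, N.arc u v → ¬ ∃ l : List V, N.IsPathFrom u v l ∧ 3 ≤ l.length

/-- Tree-child: every vertex is visible. -/
def TreeChild (N : Net V) : Prop := ∀ v ∈ N.verts, N.Visible v

/-- Normal: tree-child with no shortcuts. -/
def Normal (N : Net V) : Prop := N.TreeChild ∧ N.NoShortcuts

/-- A tree: every vertex has in-degree at most 1. -/
def IsTree (N : Net V) : Prop := ∀ v ∈ N.verts, N.inDeg v ≤ 1

/-- The cluster of `v`: the set of leaves reachable from `v`. -/
def cluster (N : Net V) (v : V) : Set V := {x ∈ N.leaves | N.reach v x}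

/-- The identifying set of `v`: the set of leaves `x` such that every directed
path from the root to `x` passes through `v`. -/
def ident (N : Net V) (v : V) : Set V :=
  {x ∈ N.leaves | ∀ l : List V, N.IsPathFrom N.root x l → v ∈ l}

/-- A digraph isomorphism between two networks, given by the map `f`. -/
def NetEquiv (M : Net V) (M' : Net W) (f : V → W) : Prop :=
  Set.BijOn f M.verts M'.verts ∧
    ∀ u ∈ M.verts, ∀ v ∈ M.verts, (M.arc u v ↔ M'.arc (f u) (f v))

/-- Two networks over the same ambient type are equivalent relative to a leaf set
`X` if there is a digraph isomorphism between them fixing each element of `X`. -/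
def EquivOn (M M' : Net V) (X : Set V) : Prop :=
  ∃ f : V → V, NetEquiv M M' f ∧ ∀ x ∈ X, f x = x

/-- `N₁ ⊕ N₂` : disjoint copies of `N₁` and `N₂` under a new root (`none`). -/
def oplus {V₁ V₂ : Type*} (N₁ : Net V₁) (N₂ : Net V₂) : Net (Option (V₁ ⊕ V₂)) where
  verts := insert none
    ((fun v => some (Sum.inl v)) '' N₁.verts ∪ (fun v => some (Sum.inr v)) '' N₂.verts)
  root := none
  arc a b :=
    match a, b with
    | none, some (Sum.inl w) => w = N₁.root
    | none, some (Sum.inr w) => w = N₂.root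
    | some (Sum.inl u), some (Sum.inl w) => N₁.arc u w
    | some (Sum.inr u), some (Sum.inr w) => N₂.arc u w
    | _, _ => False

/-- `N₁ ⊗ N₂` : identify each leaf `x` of `N₁` with the root of its own copy of `N₂`;
the copy of a non-leaf vertex `u` of `N₁` is `Sum.inl u`, and the vertex `w` of the
copy of `N₂` attached at leaf `x` of `N₁` is `Sum.inr (x, w)`. -/
def otimes {V₁ V₂ : Type*} (N₁ : Net V₁) (N₂ : Net V₂) : Net (V₁ ⊕ V₁ × V₂) where
  verts := Sum.inl '' (N₁.verts \ N₁.leaves) ∪ Sum.inr '' (N₁.leaves ×ˢ N₂.verts)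
  root := Sum.inl N₁.root
  arc a b :=
    match a, b with
    | Sum.inl u, Sum.inl w => N₁.arc u w ∧ w ∉ N₁.leaves
    | Sum.inl u, Sum.inr (x, w) => x ∈ N₁.leaves ∧ N₁.arc u x ∧ w = N₂.root
    | Sum.inr (x, w), Sum.inr (x', w') => x = x' ∧ x ∈ N₁.leaves ∧ N₂.arc w w'
    | _, _ => False

end Net

/-- A hierarchy: a collection of sets any two of which are disjoint or nested. -/
def IsHierarchy {V : Type*} (C : Set (Set V)) : Prop :=
  ∀ A ∈ C, ∀ B ∈ C, A ∩ B = ∅ ∨ A ⊆ B ∨ B ⊆ A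

theorem Set.eq_of_mem_of_ncard_eq_one {V : Type*} {s : Set V} {a b : V} (hs : s.ncard = 1)
    (ha : a ∈ s) (hb : b ∈ s) : a = b := by
  obtain ⟨m, rfl⟩ := Set.ncard_eq_one.1 hs
  exact ha.trans hb.symm

namespace Net

open Relation

variable {V : Type*}

section Paths

variable {M : Net V} {a b c u v x y z : V} {l l₁ l₂ : List V}

theorem isPathFrom_cons_cons {a' b' : V} :
    M.IsPathFrom a b (a' :: b' :: l) ↔
      a' = a ∧ M.arc a' b' ∧ M.IsPathFrom b' b (b' :: l) := by
  constructor
  · rintro ⟨hc, hh, hg⟩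
    exact ⟨Option.some_inj.1 hh, (List.isChain_cons_cons.1 hc).1, (List.isChain_cons_cons.1 hc).2,
      rfl, by rwa [List.getLast?_cons_cons] at hg⟩
  · rintro ⟨rfl, hab, hc, -, hg⟩
    exact ⟨List.isChain_cons_cons.2 ⟨hab, hc⟩, rfl, by rwa [List.getLast?_cons_cons]⟩

theorem IsPathFrom.reach_of_mem (h : M.IsPathFrom a b l) (hx : x ∈ l) :
    M.reach a x ∧ M.reach x b := by
  obtain ⟨hl, hhead, hlast⟩ := h
  have hne : l ≠ [] := List.ne_nil_of_mem hx
  rw [List.head?_eq_some_head hne, Option.some_inj] at hhead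
  rw [List.getLast?_eq_some_getLast hne, Option.some_inj] at hlast
  exact ⟨hl.induction (M.reach a) l (fun _ _ hxy hx => hx.tail hxy)
      (fun _ => hhead ▸ ReflTransGen.refl) x hx,
    hl.backwards_induction (M.reach · b) l (fun _ _ hxy hy => hy.head hxy)
      (fun _ => hlast ▸ ReflTransGen.refl) x hx⟩

theorem IsPathFrom.reach (h : M.IsPathFrom a b l) : M.reach a b :=
  (h.reach_of_mem (List.mem_of_mem_getLast? h.2.2)).1

theorem IsPathFrom.transGen (h : M.IsPathFrom a b l) (hl : 2 ≤ l.length) :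
    TransGen M.arc a b := by
  match l, hl with
  | a' :: b' :: l, _ =>
    obtain ⟨rfl, hab', hb'b⟩ := isPathFrom_cons_cons.1 h
    exact TransGen.head' hab' hb'b.reach

theorem exists_isPathFrom_of_reach (h : M.reach a b) : ∃ l, M.IsPathFrom a b l := by
  obtain ⟨l, hl, hlast⟩ := List.exists_isChain_cons_of_relationReflTransGen h
  exact ⟨a :: l, hl, rfl, by rw [List.getLast?_eq_some_getLast (List.cons_ne_nil a l), hlast]⟩

theorem IsPathFrom.append (h₁ : M.IsPathFrom a b l₁) (h₂ : M.IsPathFrom b c l₂) :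
    M.IsPathFrom a c (l₁ ++ l₂.tail) := by
  obtain ⟨hc₁, hh₁, hg₁⟩ := h₁
  obtain ⟨hc₂, hh₂, hg₂⟩ := h₂
  cases l₂ with
  | nil => simp at hh₂
  | cons b' t =>
    obtain rfl : b' = b := Option.some_inj.1 hh₂
    have hne : l₁ ≠ [] := by rintro rfl; simp at hh₁
    refine ⟨List.isChain_append.2 ⟨hc₁, hc₂.tail, ?_⟩, ?_, ?_⟩
    · intro x hx y hy
      obtain rfl : b' = x := Option.mem_some_iff.1 (hg₁ ▸ hx)
      exact (List.isChain_cons.1 hc₂).1 y hy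
    · rwa [List.head?_append_of_ne_nil _ hne]
    · cases t with
      | nil => simpa [← Option.some_inj.1 hg₂] using hg₁
      | cons e t =>
        rwa [List.tail_cons, List.getLast?_append_of_ne_nil _ (List.cons_ne_nil e t),
          ← List.getLast?_cons_cons]

theorem reach_or_reach_of_forall_mem (hx : ∀ l, M.IsPathFrom M.root y l → x ∈ l)
    (hz : M.reach M.root z) (hzy : M.reach z y) : M.reach x z ∨ M.reach z x := by
  obtain ⟨l₁, h₁⟩ := exists_isPathFrom_of_reach hz
  obtain ⟨l₂, h₂⟩ := exists_isPathFrom_of_reach hzy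
  rcases List.mem_append.1 (hx _ (h₁.append h₂)) with hx₁ | hx₂
  · exact Or.inl (h₁.reach_of_mem hx₁).2
  · exact Or.inr (h₂.reach_of_mem (List.mem_of_mem_tail hx₂)).1

theorem IsPathFrom.exists_arc_transGen (h : M.IsPathFrom u v l) (hl : 3 ≤ l.length) :
    ∃ w, M.arc u w ∧ TransGen M.arc w v := by
  match l, hl with
  | u' :: w :: l, hl =>
    obtain ⟨rfl, huw, hwv⟩ := isPathFrom_cons_cons.1 h
    exact ⟨w, huw, hwv.transGen (by simpa using hl)⟩

theorem exists_reach_minimal {S : Set V} (hS : S.Finite) (hne : S.Nonempty) :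
    ∃ m ∈ S, ∀ z ∈ S, M.reach z m → M.reach m z := by
  obtain ⟨m, hm, hmax⟩ := hS.exists_maximalFor (fun m => {z | M.reach m z}) S hne
  exact ⟨m, hm, fun z hz hzm =>
    hmax hz (fun _ hmy => hzm.trans hmy) (ReflTransGen.refl : M.reach z z)⟩

theorem exists_reach_maximal {S : Set V} (hS : S.Finite) (hne : S.Nonempty) :
    ∃ m ∈ S, ∀ z ∈ S, M.reach m z → M.reach z m := by
  obtain ⟨m, hm, hmin⟩ := hS.exists_minimalFor (fun m => {z | M.reach m z}) S hne
  exact ⟨m, hm, fun z hz hmz =>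
    hmin hz (fun _ hzy => hmz.trans hzy) (ReflTransGen.refl : M.reach m m)⟩

end Paths

theorem visible_of_mem_leaves {N : Net V} {y : V} (hy : y ∈ N.leaves) : N.Visible y :=
  ⟨hy.1, y, hy, fun _ hl => List.mem_of_mem_getLast? hl.2.2⟩

theorem transGen_of_cov_arc {N : Net V} {a b : V} (h : N.cov.arc a b) :
    TransGen N.arc a b :=
  (reflTransGen_iff_eq_or_transGen.1 h.2.2.2.1).resolve_left (Ne.symm h.2.2.1)

theorem transGen_of_normalise_arc {N : Net V} {a b : V} (h : N.normalise.arc a b) :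
    TransGen N.arc a b := by
  obtain ⟨-, -, l, hl, hlen, -⟩ := h
  exact TransGen.closed (fun _ _ h => transGen_of_cov_arc h) _ _ (hl.transGen hlen)

namespace IsPhylo

variable {N : Net V} {X : Set V} {a b c u v w x y : V}

theorem transGen_irrefl (hN : N.IsPhylo X) : ¬ TransGen N.arc a a := by
  rw [TransGen.head'_iff]
  rintro ⟨b, hab, hba⟩
  exact hN.acyclic hab hba

theorem reach_antisymm (hN : N.IsPhylo X) (hab : N.reach a b) (hba : N.reach b a) : a = b :=
  ((reflTransGen_iff_eq_or_transGen.1 hab).resolve_right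
    fun h => hN.transGen_irrefl (h.trans_left hba)).symm

theorem root_reach (hN : N.IsPhylo X) (ha : a ∈ N.verts) : N.reach N.root a := by
  obtain ⟨m, ⟨hm, hma⟩, hmin⟩ := exists_reach_minimal (M := N)
    (hN.finite.subset fun _ hc => hc.1 : {c ∈ N.verts | N.reach c a}.Finite) ⟨a, ha, .refl⟩
  have hroot : m = N.root := by
    refine hN.root_unique m hm ?_
    rw [inDeg, Set.ncard_eq_zero (s := {b | N.arc b m})
      (hN.finite.subset fun _ hb => (hN.arc_mem hb).1)]
    refine Set.eq_empty_of_forall_notMem fun b hbm => ?_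
    exact hN.acyclic hbm (hmin b ⟨(hN.arc_mem hbm).1, ReflTransGen.head hbm hma⟩ (.single hbm))
  exact hroot ▸ hma

theorem eq_of_reach_of_mem_leaves (hN : N.IsPhylo X) (hy : y ∈ N.leaves) (h : N.reach y c) :
    y = c := by
  have hout : {c | N.arc y c} = ∅ :=
    (Set.ncard_eq_zero (hN.finite.subset fun _ hc => (hN.arc_mem hc).2)).1 hy.2
  rcases h.cases_head with h | ⟨d, hyd, -⟩
  · exact h
  · exact (hout ▸ hyd : d ∈ (∅ : Set V)).elim

theorem not_cov_subdividing_of_mem_leaves (hN : N.IsPhylo X) (hy : y ∈ N.leaves) :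
    ¬ N.cov.Subdividing y := by
  have hout : {c | N.cov.arc y c} = ∅ :=
    Set.eq_empty_of_forall_notMem fun c hc =>
      hc.2.2.1 (hN.eq_of_reach_of_mem_leaves hy hc.2.2.2.1)
  intro h
  simpa [outDeg, hout] using h.2

theorem exists_cov_arc_reach_of_reach (hN : N.IsPhylo X) (ha : N.Visible a) (hc : N.Visible c)
    (hac : N.reach a c) (hne : a ≠ c) : ∃ m, N.cov.arc a m ∧ N.reach m c := by
  let S : Set V := {m | N.Visible m ∧ m ≠ a ∧ N.reach a m ∧ N.reach m c}
  obtain ⟨m, hm, hmin⟩ := exists_reach_minimal (M := N)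
    (hN.finite.subset fun _ hm => hm.1.1 : S.Finite) ⟨c, hc, hne.symm, hac, .refl⟩
  refine ⟨m, ⟨ha, hm.1, hm.2.1.symm, hm.2.2.1, ?_⟩, hm.2.2.2⟩
  rintro ⟨z, hz, hza, hzm, haz, hzm'⟩
  exact hzm (hN.reach_antisymm hzm' (hmin z ⟨hz, hza, haz, hzm'.trans hm.2.2.2⟩ hzm'))

theorem exists_reach_cov_arc_of_reach (hN : N.IsPhylo X) (ha : N.Visible a) (hc : N.Visible c)
    (hac : N.reach a c) (hne : a ≠ c) : ∃ m, N.reach a m ∧ N.cov.arc m c := by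
  let S : Set V := {m | N.Visible m ∧ m ≠ c ∧ N.reach a m ∧ N.reach m c}
  obtain ⟨m, hm, hmax⟩ := exists_reach_maximal (M := N)
    (hN.finite.subset fun _ hm => hm.1.1 : S.Finite) ⟨a, ha, hne, .refl, hac⟩
  refine ⟨m, hm.2.2.1, ⟨hm.1, hc, hm.2.1, hm.2.2.2, ?_⟩⟩
  rintro ⟨z, hz, hzm, hzc, hmz, hzc'⟩
  exact hzm (hN.reach_antisymm (hmax z ⟨hz, hzc, hm.2.2.1.trans hmz, hzc'⟩ hmz) hmz)

theorem reach_of_cov_subdividing_of_cov_arc (hN : N.IsPhylo X) (hx : N.cov.Subdividing x)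
    (hxy : N.cov.arc x y) (hc : N.Visible c) (hxc : N.reach x c) (hne : c ≠ x) :
    N.reach y c := by
  obtain ⟨m, hxm, hmc⟩ := hN.exists_cov_arc_reach_of_reach hxy.1 hc hxc hne.symm
  exact Set.eq_of_mem_of_ncard_eq_one hx.2 hxm hxy ▸ hmc

theorem reach_of_cov_subdividing_of_cov_arc' (hN : N.IsPhylo X) (hx : N.cov.Subdividing x)
    (hyx : N.cov.arc y x) (hc : N.Visible c) (hcx : N.reach c x) (hne : c ≠ x) :
    N.reach c y := by
  obtain ⟨m, hcm, hmx⟩ := hN.exists_reach_cov_arc_of_reach hc hyx.2.1 hcx hne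
  exact Set.eq_of_mem_of_ncard_eq_one hx.1 hmx hyx ▸ hcm

theorem reach_of_cov_path_of_subdividing (hN : N.IsPhylo X) {l : List V}
    (hl : N.cov.IsPathFrom a b l) (hsub : ∀ x ∈ l.dropLast, N.cov.Subdividing x)
    (hc : N.Visible c) (hcs : ¬ N.cov.Subdividing c) (hac : N.reach a c) : N.reach b c := by
  induction l generalizing a with
  | nil => exact absurd hl.2.1 (by simp)
  | cons a' l ih =>
    cases l with
    | nil =>
      obtain ⟨-, ha, hb⟩ := hl
      simp only [List.head?_cons, List.getLast?_singleton, Option.some_inj] at ha hb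
      exact hb ▸ ha ▸ hac
    | cons b' l =>
      obtain ⟨rfl, hab', hb'b⟩ := isPathFrom_cons_cons.1 hl
      rw [List.dropLast_cons_cons] at hsub
      have ha := hsub a' List.mem_cons_self
      exact ih hb'b (fun x hx => hsub x (List.mem_cons_of_mem a' hx))
        (hN.reach_of_cov_subdividing_of_cov_arc ha hab' hc hac fun h => hcs (h ▸ ha))

/-- If the `Cov(N)`-path behind the arc has an interior vertex `x₁`, a leaf witnessing the
visibility of `x₁` lies below `v`, so `w` is comparable with `x₁`; either way the subdivided
path forces `w` above `u` or below `v`. -/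
theorem not_transGen_of_normalise_arc (hN : N.IsPhylo X) (huv : N.normalise.arc u v)
    (hw : N.Visible w) (hws : ¬ N.cov.Subdividing w) (huw : TransGen N.arc u w)
    (hwv : TransGen N.arc w v) : False := by
  obtain ⟨-, -, l, hl, hlen, hsub⟩ := huv
  match l, hlen with
  | u' :: x₁ :: r, _ =>
    obtain ⟨rfl, hux₁, hx₁v⟩ := isPathFrom_cons_cons.1 hl
    rw [List.tail_cons] at hsub
    cases r with
    | nil =>
      obtain rfl : x₁ = v := Option.some_inj.1 hx₁v.2.2
      exact hux₁.2.2.2.2 ⟨w, hw, fun h => hN.transGen_irrefl (h ▸ huw),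
        fun h => hN.transGen_irrefl (h ▸ hwv), huw.to_reflTransGen, hwv.to_reflTransGen⟩
    | cons c r =>
      have hx₁ : N.cov.Subdividing x₁ := hsub x₁ (by simp)
      obtain ⟨-, y, hy, hx₁y⟩ := hux₁.2.1
      obtain ⟨p, hp⟩ := exists_isPathFrom_of_reach (hN.root_reach hy.1)
      have hvy : N.reach v y := hN.reach_of_cov_path_of_subdividing hx₁v hsub
        (visible_of_mem_leaves hy) (hN.not_cov_subdividing_of_mem_leaves hy)
        (hp.reach_of_mem (hx₁y p hp)).2
      rcases reach_or_reach_of_forall_mem hx₁y (hN.root_reach hw.1)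
          (hwv.to_reflTransGen.trans hvy) with hx₁w | hwx₁
      · exact hN.transGen_irrefl (hwv.trans_left
          (hN.reach_of_cov_path_of_subdividing hx₁v hsub hw hws hx₁w))
      · exact hN.transGen_irrefl (huw.trans_left (hN.reach_of_cov_subdividing_of_cov_arc' hx₁
          hux₁ hw hwx₁ fun h => hws (h ▸ hx₁)))

end IsPhylo

end Net

/-- The normalisation `Ñ` of a rooted phylogenetic network `N` has no
shortcuts: it contains no arc `(u,v)` for which it also contains a directed path
from `u` to `v` of length at least 2. -/
theorem stmt1 {V : Type*} (N : Net V) (X : Set V) (hN : N.IsPhylo X) :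
    N.normalise.NoShortcuts := by
  rintro u v huv ⟨l, hl, hlen⟩
  obtain ⟨w, huw, hwv⟩ := hl.exists_arc_transGen hlen
  exact hN.not_transGen_of_normalise_arc huv huw.2.1.1 huw.2.1.2
    (Net.transGen_of_normalise_arc huw)
    (Relation.TransGen.closed (fun _ _ h => Net.transGen_of_normalise_arc h) _ _ hwv)
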